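/- Monotonic decay of total perturbation energy in plane-Poiseuille flow: Under the hypotheses of the energy dissipation identity — α ∈ ℝ; ν > 0; φ : ℝ × ℝ → ℂ and v : ℝ × ℝ → ℝ smooth; for all t: φ(t, ±1) = 0, ∂_yφ(t, ±1) = 0, v(t, ±1) = 0, ∫_{−1}^{1} v(t,y) dy = 0; φ satisfying ∂_t(∂_y²φ − α²φ) = ν·(∂_y² − α²)²φ − iα(1 − y²)(∂_y²φ − α²φ) − 2iα·φ on ℝ × [−1,1]; and v satisfying ∂_t v = ν·∂_y² v + 2α·∂_y( Im( conj(φ)·∂_yφ ) ) on ℝ × [−1,1] — the function t ↦ E_φ(t) + δE_U(t), with E_φ(t) = ∫_{−1}^{1} ( |∂_yφ|² + α²|φ|² ) dy and δE_U(t) = ∫_{−1}^{1} (1 − y²)·v dy, is nonincreasing on ℝ. -/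

import Mathlib

open MeasureTheory Function

section helpers
variable {E : Type*} [NormedAddCommGroup E] [NormedSpace ℝ E]

noncomputable def pdy (G : ℝ × ℝ → E) : ℝ × ℝ → E := fun p => fderiv ℝ G p (0, 1)
noncomputable def pdt (G : ℝ × ℝ → E) : ℝ × ℝ → E := fun p => fderiv ℝ G p (1, 0)

variable {G : ℝ × ℝ → E}

lemma ContDiff.pdy (hG : ContDiff ℝ (⊤ : ℕ∞) G) : ContDiff ℝ (⊤ : ℕ∞) (pdy G) :=
  (hG.fderiv_right (by simp)).clm_apply contDiff_const

lemma ContDiff.pdt (hG : ContDiff ℝ (⊤ : ℕ∞) G) : ContDiff ℝ (⊤ : ℕ∞) (pdt G) :=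
  (hG.fderiv_right (by simp)).clm_apply contDiff_const

lemma hasDerivAt_snd (hG : ContDiff ℝ (⊤ : ℕ∞) G) (t y : ℝ) :
    HasDerivAt (fun z => G (t, z)) (pdy G (t, y)) y := by
  have h1 : HasFDerivAt G (fderiv ℝ G (t, y)) (t, y) :=
    (hG.differentiable (by simp) (t, y)).hasFDerivAt
  have h2 : HasFDerivAt (fun z : ℝ => (t, z)) (ContinuousLinearMap.inr ℝ ℝ ℝ) y :=
    hasFDerivAt_prodMk_right t y
  have := (h1.comp y h2).hasDerivAt
  simp only [pdy]; exact this

lemma hasDerivAt_fst (hG : ContDiff ℝ (⊤ : ℕ∞) G) (t y : ℝ) :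
    HasDerivAt (fun s => G (s, y)) (pdt G (t, y)) t := by
  have h1 : HasFDerivAt G (fderiv ℝ G (t, y)) (t, y) :=
    (hG.differentiable (by simp) (t, y)).hasFDerivAt
  have h2 : HasFDerivAt (fun s : ℝ => (s, y)) (ContinuousLinearMap.inl ℝ ℝ ℝ) t :=
    hasFDerivAt_prodMk_left t y
  have := (h1.comp t h2).hasDerivAt
  simp only [pdt]; exact this

lemma pdt_pdy_swap (hG : ContDiff ℝ (⊤ : ℕ∞) G) (p : ℝ × ℝ) : pdt (pdy G) p = pdy (pdt G) p := by
  have hd : Differentiable ℝ (fderiv ℝ G) :=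
    (hG.fderiv_right (m := (⊤ : ℕ∞)) (n := (⊤ : ℕ∞)) (by simp)).differentiable (by simp)
  have h1 : ∀ w : ℝ × ℝ, fderiv ℝ (fun q => fderiv ℝ G q w) p =
      (fderiv ℝ (fderiv ℝ G) p).flip w := by
    intro w
    rw [fderiv_clm_apply (hd p) (differentiableAt_const w)]
    simp
  have hsymm : IsSymmSndFDerivAt ℝ G p :=
    (hG.contDiffAt).isSymmSndFDerivAt (by rw [minSmoothness_of_isRCLikeNormedField]; exact WithTop.coe_le_coe.mpr le_top)
  have e1 : pdy G = fun q => fderiv ℝ G q (0, 1) := rfl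
  have e2 : pdt G = fun q => fderiv ℝ G q (1, 0) := rfl
  show fderiv ℝ (pdy G) p (1, 0) = fderiv ℝ (pdt G) p (0, 1)
  rw [e1, e2, h1, h1]
  simpa using hsymm (1, 0) (0, 1)

end helpers

section paramint
open Set Metric

lemma hasDerivAt_setIntegral_param {F F' : ℝ → ℝ → ℝ}
    (hF : Continuous (uncurry F)) (hF' : Continuous (uncurry F'))
    (hdiff : ∀ s y : ℝ, HasDerivAt (fun u => F u y) (F' s y) s) (t : ℝ) :
    HasDerivAt (fun s => ∫ y in Set.Icc (-1 : ℝ) 1, F s y)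
      (∫ y in Set.Icc (-1 : ℝ) 1, F' t y) t := by
  have hK : IsCompact ((Icc (t - 1) (t + 1)) ×ˢ (Icc (-1 : ℝ) 1)) :=
    isCompact_Icc.prod isCompact_Icc
  obtain ⟨C, hC⟩ := hK.exists_bound_of_continuousOn hF'.continuousOn
  have key := hasDerivAt_integral_of_dominated_loc_of_deriv_le
    (μ := volume.restrict (Icc (-1 : ℝ) 1)) (x₀ := t) (F := F) (F' := F')
    (bound := fun _ => C) (s := ball t 1) (ball_mem_nhds t one_pos)
    (Filter.Eventually.of_forall fun x =>
      (hF.comp (continuous_const.prodMk continuous_id)).aestronglyMeasurable)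
    (by exact (hF.comp (continuous_const.prodMk continuous_id) :
        Continuous fun y => F t y).integrableOn_Icc)
    ?_ ?_ (integrable_const C)
    (Filter.Eventually.of_forall fun y => fun x _ => hdiff x y)
  · exact key.2
  · exact (hF'.comp (continuous_const.prodMk continuous_id)).aestronglyMeasurable
  · refine (ae_restrict_mem measurableSet_Icc).mono fun y hy => fun x hx => ?_
    have : (x, y) ∈ (Icc (t - 1) (t + 1)) ×ˢ (Icc (-1 : ℝ) 1) := by
      constructor
      · have := mem_ball_iff_norm.mp hx
        rw [Real.norm_eq_abs, abs_sub_lt_iff] at this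
        constructor <;> linarith [this.1, this.2]
      · exact hy
    simpa using hC _ this

end paramint

section more
open Set intervalIntegral

lemma Continuous.slice₂ {E : Type*} [NormedAddCommGroup E] {G : ℝ × ℝ → E}
    (hG : Continuous G) (t : ℝ) : Continuous fun z => G (t, z) :=
  hG.comp (continuous_const.prodMk continuous_id)

lemma icc_int {E : Type*} [NormedAddCommGroup E] [NormedSpace ℝ E] (f : ℝ → E) :
    ∫ y in Set.Icc (-1 : ℝ) 1, f y = ∫ y in (-1 : ℝ)..1, f y := by
  rw [intervalIntegral.integral_of_le (by norm_num), integral_Icc_eq_integral_Ioc]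

lemma IBPc {u w u' w' : ℝ → ℂ}
    (hu : ∀ x, HasDerivAt u (u' x) x) (hw : ∀ x, HasDerivAt w (w' x) x)
    (hcu : Continuous u') (hcw : Continuous w') :
    ∫ x in (-1 : ℝ)..1, u x * w' x =
      u 1 * w 1 - u (-1) * w (-1) - ∫ x in (-1 : ℝ)..1, u' x * w x :=
  intervalIntegral.integral_mul_deriv_eq_deriv_mul (fun x _ => hu x) (fun x _ => hw x)
    (hcu.intervalIntegrable _ _) (hcw.intervalIntegrable _ _)

lemma IBPr {u w u' w' : ℝ → ℝ}
    (hu : ∀ x, HasDerivAt u (u' x) x) (hw : ∀ x, HasDerivAt w (w' x) x)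
    (hcu : Continuous u') (hcw : Continuous w') :
    ∫ x in (-1 : ℝ)..1, u x * w' x =
      u 1 * w 1 - u (-1) * w (-1) - ∫ x in (-1 : ℝ)..1, u' x * w x :=
  intervalIntegral.integral_mul_deriv_eq_deriv_mul (fun x _ => hu x) (fun x _ => hw x)
    (hcu.intervalIntegrable _ _) (hcw.intervalIntegrable _ _)

lemma int_re {f : ℝ → ℂ} (hf : Continuous f) :
    (∫ x in (-1 : ℝ)..1, f x).re = ∫ x in (-1 : ℝ)..1, (f x).re := by
  simpa using
    (Complex.reCLM.intervalIntegral_comp_comm (hf.intervalIntegrable (-1) 1)).symm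

lemma normsq_hasDerivAt {g : ℝ → ℂ} {g' : ℂ} {t : ℝ} (hg : HasDerivAt g g' t) :
    HasDerivAt (fun s => ‖g s‖ ^ 2) (2 * ((starRingEnd ℂ) (g t) * g').re) t := by
  have hre : HasDerivAt (fun s => (g s).re) g'.re t := by
    have := Complex.reCLM.hasFDerivAt.comp_hasDerivAt t hg; exact this
  have him : HasDerivAt (fun s => (g s).im) g'.im t := by
    have := Complex.imCLM.hasFDerivAt.comp_hasDerivAt t hg; exact this
  have h : HasDerivAt (fun s => (g s).re ^ 2 + (g s).im ^ 2)
      (2 * (g t).re * g'.re + 2 * (g t).im * g'.im) t := by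
    exact ((hre.pow 2).add (him.pow 2)).congr_deriv (by norm_num)
  have : ∀ s, ‖g s‖ ^ 2 = (g s).re ^ 2 + (g s).im ^ 2 := by
    intro s
    rw [Complex.sq_norm, Complex.normSq_apply]
    ring
  rw [show (fun s => ‖g s‖ ^ 2) = fun s => (g s).re ^ 2 + (g s).im ^ 2 from funext this]
  convert h using 1
  simp [Complex.mul_re]; ring

lemma star_mul_self_re (z : ℂ) : (star z * z).re = ‖z‖ ^ 2 := by
  rw [Complex.sq_norm, Complex.normSq_apply]
  simp [Complex.mul_re]

lemma star_mul_self_im (z : ℂ) : (star z * z).im = 0 := by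
  simp [Complex.mul_im]; ring

lemma im_hasDerivAt {g : ℝ → ℂ} {g' : ℂ} {t : ℝ} (hg : HasDerivAt g g' t) :
    HasDerivAt (fun s => (g s).im) g'.im t := by
  have := Complex.imCLM.hasFDerivAt.comp_hasDerivAt t hg; exact this

end more

open Set intervalIntegral

set_option maxHeartbeats 1000000 in
/-- Monotonic decay of total perturbation energy in plane-Poiseuille flow:
under the time-domain Orr–Sommerfeld equation for the stream-function amplitude `φ`,
the forced diffusion equation for the mean-flow modification `v`, no-slip boundary
conditions and zero net mass flux, the total second-order energy
`t ↦ E_φ(t) + δE_U(t)` is nonincreasing on `ℝ`. -/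
theorem ppf_energy_nonincreasing (α ν : ℝ) (hν : 0 < ν)
    (φ : ℝ → ℝ → ℂ) (v : ℝ → ℝ → ℝ)
    (hφ : ContDiff ℝ (⊤ : ℕ∞) (Function.uncurry φ))
    (hv : ContDiff ℝ (⊤ : ℕ∞) (Function.uncurry v))
    (hbc1 : ∀ t : ℝ, φ t 1 = 0) (hbc2 : ∀ t : ℝ, φ t (-1) = 0)
    (hbc3 : ∀ t : ℝ, deriv (φ t) 1 = 0) (hbc4 : ∀ t : ℝ, deriv (φ t) (-1) = 0)
    (hbv1 : ∀ t : ℝ, v t 1 = 0) (hbv2 : ∀ t : ℝ, v t (-1) = 0)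
    (hmass : ∀ t : ℝ, ∫ y in Set.Icc (-1 : ℝ) 1, v t y = 0)
    (hOS : ∀ t : ℝ, ∀ y ∈ Set.Icc (-1 : ℝ) 1,
      deriv (fun s => deriv (deriv (φ s)) y - (α : ℂ) ^ 2 * φ s y) t =
        (ν : ℂ) * (deriv^[4] (φ t) y - 2 * (α : ℂ) ^ 2 * deriv (deriv (φ t)) y
            + (α : ℂ) ^ 4 * φ t y)
          - Complex.I * (α : ℂ) * (1 - (y : ℂ) ^ 2)
            * (deriv (deriv (φ t)) y - (α : ℂ) ^ 2 * φ t y)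
          - 2 * Complex.I * (α : ℂ) * φ t y)
    (hdiff : ∀ t : ℝ, ∀ y ∈ Set.Icc (-1 : ℝ) 1,
      deriv (fun s => v s y) t =
        ν * deriv (deriv (v t)) y
          + 2 * α * deriv (fun y' => ((starRingEnd ℂ) (φ t y') * deriv (φ t) y').im) y) :
    Antitone (fun t =>
      (∫ y in Set.Icc (-1 : ℝ) 1, (‖deriv (φ t) y‖ ^ 2 + α ^ 2 * ‖φ t y‖ ^ 2))
      + ∫ y in Set.Icc (-1 : ℝ) 1, (1 - y ^ 2) * v t y) := by
  classical
  set Φ : ℝ × ℝ → ℂ := Function.uncurry φ with hΦdef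
  set V : ℝ × ℝ → ℝ := Function.uncurry v with hVdef
  -- pointwise y-derivative identities
  have hd1 : ∀ t y, HasDerivAt (φ t) (pdy Φ (t, y)) y := fun t y => hasDerivAt_snd hφ t y
  have hP1 : ∀ t y, deriv (φ t) y = pdy Φ (t, y) := fun t y => (hd1 t y).deriv
  have hder1 : ∀ t, deriv (φ t) = fun y => pdy Φ (t, y) := fun t => funext (hP1 t)
  have hd2 : ∀ t y, HasDerivAt (deriv (φ t)) (pdy (pdy Φ) (t, y)) y := by
    intro t y; rw [hder1 t]; exact hasDerivAt_snd hφ.pdy t y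
  have hP2 : ∀ t y, deriv (deriv (φ t)) y = pdy (pdy Φ) (t, y) := fun t y => (hd2 t y).deriv
  have hder2 : ∀ t, deriv (deriv (φ t)) = fun y => pdy (pdy Φ) (t, y) :=
    fun t => funext (hP2 t)
  have hd3 : ∀ t y, HasDerivAt (deriv (deriv (φ t))) (pdy (pdy (pdy Φ)) (t, y)) y := by
    intro t y; rw [hder2 t]; exact hasDerivAt_snd hφ.pdy.pdy t y
  have hP3 : ∀ t y, deriv (deriv (deriv (φ t))) y = pdy (pdy (pdy Φ)) (t, y) :=
    fun t y => (hd3 t y).deriv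
  have hder3 : ∀ t, deriv (deriv (deriv (φ t))) = fun y => pdy (pdy (pdy Φ)) (t, y) :=
    fun t => funext (hP3 t)
  have hd4 : ∀ t y, HasDerivAt (deriv (deriv (deriv (φ t)))) (pdy (pdy (pdy (pdy Φ))) (t, y)) y := by
    intro t y; rw [hder3 t]; exact hasDerivAt_snd hφ.pdy.pdy.pdy t y
  have hP4 : ∀ t y, deriv^[4] (φ t) y = pdy (pdy (pdy (pdy Φ))) (t, y) := by
    intro t y
    have : deriv^[4] (φ t) = deriv (deriv (deriv (deriv (φ t)))) := by
      simp [Function.iterate_succ_apply']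
    rw [this]
    exact (hd4 t y).deriv
  -- time derivatives
  have hdT0 : ∀ t y, HasDerivAt (fun s => φ s y) (pdt Φ (t, y)) t := fun t y =>
    hasDerivAt_fst hφ t y
  have hT0 : ∀ t y, deriv (fun s => φ s y) t = pdt Φ (t, y) := fun t y => (hdT0 t y).deriv
  have hT0b1 : ∀ t, pdt Φ (t, 1) = 0 := by
    intro t
    have h := (hdT0 t 1).deriv
    rw [show (fun s => φ s (1 : ℝ)) = (fun _ : ℝ => (0 : ℂ)) from funext hbc1,
      deriv_const] at h
    exact h.symm
  have hT0b2 : ∀ t, pdt Φ (t, -1) = 0 := by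
    intro t
    have h := (hdT0 t (-1)).deriv
    rw [show (fun s => φ s (-1 : ℝ)) = (fun _ : ℝ => (0 : ℂ)) from funext hbc2,
      deriv_const] at h
    exact h.symm
  -- mixed partials swaps
  have hswapf : pdt (pdy Φ) = pdy (pdt Φ) := funext (pdt_pdy_swap hφ)
  have hswap2 : ∀ p, pdt (pdy (pdy Φ)) p = pdy (pdy (pdt Φ)) p := by
    intro p
    rw [pdt_pdy_swap hφ.pdy p, hswapf]
  -- Orr–Sommerfeld LHS identity
  have hQT : ∀ t y, deriv (fun s => deriv (deriv (φ s)) y - (α : ℂ) ^ 2 * φ s y) t =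
      pdy (pdy (pdt Φ)) (t, y) - (α : ℂ) ^ 2 * pdt Φ (t, y) := by
    intro t y
    have h1 : HasDerivAt (fun s => pdy (pdy Φ) (s, y) - (α : ℂ) ^ 2 * Φ (s, y))
        (pdt (pdy (pdy Φ)) (t, y) - (α : ℂ) ^ 2 * pdt Φ (t, y)) t :=
      (hasDerivAt_fst hφ.pdy.pdy t y).sub ((hasDerivAt_fst hφ t y).const_mul ((α : ℂ) ^ 2))
    have e : (fun s => deriv (deriv (φ s)) y - (α : ℂ) ^ 2 * φ s y)
        = fun s => pdy (pdy Φ) (s, y) - (α : ℂ) ^ 2 * Φ (s, y) := by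
      funext s; rw [hP2]; rfl
    rw [e, h1.deriv, hswap2]
  -- v-side identities
  have hdV1 : ∀ t y, HasDerivAt (v t) (pdy V (t, y)) y := fun t y => hasDerivAt_snd hv t y
  have hderV1 : ∀ t, deriv (v t) = fun y => pdy V (t, y) :=
    fun t => funext fun y => (hdV1 t y).deriv
  have hdV2 : ∀ t y, HasDerivAt (deriv (v t)) (pdy (pdy V) (t, y)) y := by
    intro t y; rw [hderV1 t]; exact hasDerivAt_snd hv.pdy t y
  have hV2 : ∀ t y, deriv (deriv (v t)) y = pdy (pdy V) (t, y) := fun t y => (hdV2 t y).deriv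
  have hdS0 : ∀ t y, HasDerivAt (fun s => v s y) (pdt V (t, y)) t := fun t y =>
    hasDerivAt_fst hv t y
  have hS0 : ∀ t y, deriv (fun s => v s y) t = pdt V (t, y) := fun t y => (hdS0 t y).deriv
  -- Reynolds stress function
  set W : ℝ × ℝ → ℝ := fun p => ((starRingEnd ℂ) (Φ p) * pdy Φ p).im with hWdef
  have hdW : ∀ t y, HasDerivAt (fun z => W (t, z))
      (((starRingEnd ℂ) (Φ (t, y)) * pdy (pdy Φ) (t, y)).im) y := by
    intro t y
    have h1 : HasDerivAt (fun z => (starRingEnd ℂ) (Φ (t, z)))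
        ((starRingEnd ℂ) (pdy Φ (t, y))) y := (hasDerivAt_snd hφ t y).star
    have h2 := h1.mul (hasDerivAt_snd hφ.pdy t y)
    have h3 := im_hasDerivAt h2
    have e0 : ((starRingEnd ℂ) (pdy Φ (t, y)) * pdy Φ (t, y)).im = 0 := by
      simp [Complex.mul_im]; ring
    simpa [hWdef, e0] using h3
  have hWb1 : ∀ t, W (t, 1) = 0 := by
    intro t
    show ((starRingEnd ℂ) (Φ (t, 1)) * pdy Φ (t, 1)).im = 0
    rw [show Φ (t, 1) = φ t 1 from rfl, hbc1]
    simp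
  have hWb2 : ∀ t, W (t, -1) = 0 := by
    intro t
    show ((starRingEnd ℂ) (Φ (t, -1)) * pdy Φ (t, -1)).im = 0
    rw [show Φ (t, -1) = φ t (-1) from rfl, hbc2]
    simp
  have cW : Continuous W :=
    Complex.continuous_im.comp ((continuous_star.comp hφ.continuous).mul hφ.pdy.continuous)
  -- the t-derivatives of the two energy integrals
  set FA' : ℝ → ℝ → ℝ := fun t y =>
      2 * ((starRingEnd ℂ) (pdy Φ (t, y)) * pdy (pdt Φ) (t, y)).re
      + α ^ 2 * (2 * ((starRingEnd ℂ) (Φ (t, y)) * pdt Φ (t, y)).re) with hFA'def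
  set FG' : ℝ → ℝ → ℝ := fun t y => (1 - y ^ 2) * pdt V (t, y) with hFG'def
  have cstar2 : ∀ (f g : ℝ × ℝ → ℂ), Continuous f → Continuous g →
      Continuous (fun p : ℝ × ℝ => ((starRingEnd ℂ) (f p) * g p).re) := by
    intro f g hf hg
    exact Complex.continuous_re.comp ((continuous_star.comp hf).mul hg)
  have cFA' : Continuous (Function.uncurry FA') := by
    have h1 := cstar2 _ _ hφ.pdy.continuous hφ.pdt.pdy.continuous
    have h2 := cstar2 _ _ hφ.continuous hφ.pdt.continuous
    exact ((continuous_const.mul h1).add (continuous_const.mul (continuous_const.mul h2)))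
  have cFG' : Continuous (Function.uncurry FG') := by
    have : Continuous (fun p : ℝ × ℝ => 1 - p.2 ^ 2) :=
      continuous_const.sub (continuous_snd.pow 2)
    exact this.mul hv.pdt.continuous
  have hA : ∀ t, HasDerivAt
      (fun s => ∫ y in Set.Icc (-1 : ℝ) 1, (‖deriv (φ s) y‖ ^ 2 + α ^ 2 * ‖φ s y‖ ^ 2))
      (∫ y in Set.Icc (-1 : ℝ) 1, FA' t y) t := by
    intro t
    have e : (fun s => ∫ y in Set.Icc (-1 : ℝ) 1, (‖deriv (φ s) y‖ ^ 2 + α ^ 2 * ‖φ s y‖ ^ 2))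
        = fun s => ∫ y in Set.Icc (-1 : ℝ) 1, (‖pdy Φ (s, y)‖ ^ 2 + α ^ 2 * ‖Φ (s, y)‖ ^ 2) := by
      funext s; simp only [hP1]; rfl
    rw [e]
    apply hasDerivAt_setIntegral_param (F' := FA')
    · have : Continuous (fun p : ℝ × ℝ => ‖pdy Φ p‖ ^ 2 + α ^ 2 * ‖Φ p‖ ^ 2) := by
        exact ((hφ.pdy.continuous.norm.pow 2).add
          (continuous_const.mul (hφ.continuous.norm.pow 2)))
      exact this
    · exact cFA'
    · intro s y
      have h1 := normsq_hasDerivAt (hasDerivAt_fst hφ.pdy s y)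
      have h2 := (normsq_hasDerivAt (hasDerivAt_fst hφ s y)).const_mul (α ^ 2)
      have h3 := h1.add h2
      rw [hFA'def]
      simp only [← hswapf]
      exact h3
  have hG : ∀ t, HasDerivAt
      (fun s => ∫ y in Set.Icc (-1 : ℝ) 1, (1 - y ^ 2) * v s y)
      (∫ y in Set.Icc (-1 : ℝ) 1, FG' t y) t := by
    intro t
    apply hasDerivAt_setIntegral_param (F' := FG')
    · have : Continuous (fun p : ℝ × ℝ => 1 - p.2 ^ 2) :=
        continuous_const.sub (continuous_snd.pow 2)
      exact this.mul hv.continuous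
    · exact cFG'
    · intro s y
      exact (hasDerivAt_fst hv s y).const_mul (1 - y ^ 2)
  have hTot : ∀ t, HasDerivAt
      (fun t => (∫ y in Set.Icc (-1 : ℝ) 1, (‖deriv (φ t) y‖ ^ 2 + α ^ 2 * ‖φ t y‖ ^ 2))
        + ∫ y in Set.Icc (-1 : ℝ) 1, (1 - y ^ 2) * v t y)
      ((∫ y in Set.Icc (-1 : ℝ) 1, FA' t y) + ∫ y in Set.Icc (-1 : ℝ) 1, FG' t y) t :=
    fun t => (hA t).add (hG t)
  have hD : ∀ t, (∫ y in Set.Icc (-1 : ℝ) 1, FA' t y)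
      + (∫ y in Set.Icc (-1 : ℝ) 1, FG' t y) ≤ 0 := by
    intro t
    rw [icc_int, icc_int]
    have memIcc : ∀ y ∈ Set.uIcc (-1 : ℝ) 1, y ∈ Set.Icc (-1 : ℝ) 1 := by
      rw [Set.uIcc_of_le (by norm_num : (-1:ℝ) ≤ 1)]; exact fun y hy => hy
    -- boundary values
    have b0p : Φ (t, 1) = 0 := hbc1 t
    have b0m : Φ (t, -1) = 0 := hbc2 t
    have b1p : pdy Φ (t, 1) = 0 := by rw [← hP1 t 1]; exact hbc3 t
    have b1m : pdy Φ (t, -1) = 0 := by rw [← hP1 t (-1)]; exact hbc4 t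
    have bV0p : V (t, 1) = 0 := hbv1 t
    have bV0m : V (t, -1) = 0 := hbv2 t
    -- continuity of slices
    have c0 : Continuous fun y : ℝ => Φ (t, y) := hφ.continuous.slice₂ t
    have c1 : Continuous fun y : ℝ => pdy Φ (t, y) := hφ.pdy.continuous.slice₂ t
    have c2 : Continuous fun y : ℝ => pdy (pdy Φ) (t, y) := hφ.pdy.pdy.continuous.slice₂ t
    have c3 : Continuous fun y : ℝ => pdy (pdy (pdy Φ)) (t, y) :=
      hφ.pdy.pdy.pdy.continuous.slice₂ t
    have c4 : Continuous fun y : ℝ => pdy (pdy (pdy (pdy Φ))) (t, y) :=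
      hφ.pdy.pdy.pdy.pdy.continuous.slice₂ t
    have ct0 : Continuous fun y : ℝ => pdt Φ (t, y) := hφ.pdt.continuous.slice₂ t
    have ct1 : Continuous fun y : ℝ => pdy (pdt Φ) (t, y) := hφ.pdt.pdy.continuous.slice₂ t
    have ct2 : Continuous fun y : ℝ => pdy (pdy (pdt Φ)) (t, y) :=
      hφ.pdt.pdy.pdy.continuous.slice₂ t
    have cv1 : Continuous fun y : ℝ => pdy V (t, y) := hv.pdy.continuous.slice₂ t
    have cv2 : Continuous fun y : ℝ => pdy (pdy V) (t, y) := hv.pdy.pdy.continuous.slice₂ t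
    have cWt : Continuous fun y : ℝ => W (t, y) := cW.slice₂ t
    have cdW : Continuous fun y : ℝ => ((starRingEnd ℂ) (Φ (t, y)) * pdy (pdy Φ) (t, y)).im :=
      Complex.continuous_im.comp ((continuous_star.comp c0).mul c2)
    -- parabolic-weight integration by parts
    have hu1 : ∀ y : ℝ, HasDerivAt (fun y : ℝ => 1 - y ^ 2) (-(2 * y)) y := by
      intro y
      have h := ((hasDerivAt_id y).pow 2).const_sub (1 : ℝ)
      simpa using h
    have cneg : Continuous fun y : ℝ => -(2 * y) :=
      (continuous_const.mul continuous_id).neg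
    have par_ibp : ∀ (f f' : ℝ → ℝ), (∀ y, HasDerivAt f (f' y) y) → Continuous f' →
        ∫ y in (-1 : ℝ)..1, (1 - y ^ 2) * f' y = 2 * ∫ y in (-1 : ℝ)..1, y * f y := by
      intro f f' hf cf'
      have e : ∫ y in (-1 : ℝ)..1, -(2 * y) * f y
          = (-2) * ∫ y in (-1 : ℝ)..1, y * f y := by
        rw [← intervalIntegral.integral_const_mul]
        apply intervalIntegral.integral_congr
        intro y _; ring
      have h := IBPr hu1 hf cneg cf'
      rw [e] at h
      rw [h]; norm_num
    -- ∫ (1-y²) ∂²v = 0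
    have hIV : ∫ y in (-1 : ℝ)..1, (1 - y ^ 2) * pdy (pdy V) (t, y)
        = 2 * ∫ y in (-1 : ℝ)..1, y * pdy V (t, y) :=
      par_ibp (fun y => pdy V (t, y)) _ (fun y => hasDerivAt_snd hv.pdy t y) cv2
    have hIV2 : ∫ y in (-1 : ℝ)..1, y * pdy V (t, y) = 0 := by
      have h := IBPr (u := fun y : ℝ => y) (u' := fun _ => (1 : ℝ))
        (w := fun y => V (t, y)) (w' := fun y => pdy V (t, y))
        (fun y => hasDerivAt_id y) (fun y => hasDerivAt_snd hv t y)
        continuous_const cv1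
      have hm : ∫ y in (-1 : ℝ)..1, (1 : ℝ) * V (t, y) = 0 := by
        simp only [one_mul]
        rw [← icc_int]
        exact hmass t
      rw [h, hm]; simp [bV0p, bV0m]
    -- ∫ (1-y²) ∂(Im(conj φ ∂φ)) = 2 ∫ y W
    have hIW : ∫ y in (-1 : ℝ)..1,
        (1 - y ^ 2) * ((starRingEnd ℂ) (Φ (t, y)) * pdy (pdy Φ) (t, y)).im
        = 2 * ∫ y in (-1 : ℝ)..1, y * W (t, y) :=
      par_ibp (fun y => W (t, y)) _ (fun y => hdW t y) cdW
    -- value of the mean-flow part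
    have hFGval : ∫ y in (-1 : ℝ)..1, FG' t y = 4 * α * ∫ y in (-1 : ℝ)..1, y * W (t, y) := by
      have hcong : ∫ y in (-1 : ℝ)..1, FG' t y = ∫ y in (-1 : ℝ)..1,
          (ν * ((1 - y ^ 2) * pdy (pdy V) (t, y))
            + 2 * α * ((1 - y ^ 2) *
              ((starRingEnd ℂ) (Φ (t, y)) * pdy (pdy Φ) (t, y)).im)) := by
        apply intervalIntegral.integral_congr
        intro y hy
        have hd := hdiff t y (memIcc y hy)
        rw [hS0 t y, hV2 t y] at hd
        have e2 : (fun y' => ((starRingEnd ℂ) (φ t y') * deriv (φ t) y').im)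
            = fun z => W (t, z) := by
          funext z; rw [hP1]; rfl
        rw [e2, (hdW t y).deriv] at hd
        show (1 - y ^ 2) * pdt V (t, y) = _
        rw [hd]; ring
      rw [hcong, intervalIntegral.integral_add, intervalIntegral.integral_const_mul,
        intervalIntegral.integral_const_mul, hIV, hIV2, hIW]
      · ring
      · apply Continuous.intervalIntegrable
        exact continuous_const.mul ((continuous_const.sub (continuous_id.pow 2)).mul cv2)
      · apply Continuous.intervalIntegrable
        exact continuous_const.mul ((continuous_const.sub (continuous_id.pow 2)).mul cdW)
    -- star continuity and derivatives
    have cs0 : Continuous fun y : ℝ => (starRingEnd ℂ) (Φ (t, y)) := by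
      exact continuous_star.comp c0
    have cs1 : Continuous fun y : ℝ => (starRingEnd ℂ) (pdy Φ (t, y)) := by
      exact continuous_star.comp c1
    have cs2 : Continuous fun y : ℝ => (starRingEnd ℂ) (pdy (pdy Φ) (t, y)) := by
      exact continuous_star.comp c2
    have Hs0 : ∀ y, HasDerivAt (fun z => (starRingEnd ℂ) (Φ (t, z)))
        ((starRingEnd ℂ) (pdy Φ (t, y))) y := fun y => (hasDerivAt_snd hφ t y).star
    have Hs1 : ∀ y, HasDerivAt (fun z => (starRingEnd ℂ) (pdy Φ (t, z)))
        ((starRingEnd ℂ) (pdy (pdy Φ) (t, y))) y := fun y => (hasDerivAt_snd hφ.pdy t y).star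
    -- complex integration by parts
    have ibpτ : ∫ y in (-1 : ℝ)..1, (starRingEnd ℂ) (Φ (t, y)) * pdy (pdy (pdt Φ)) (t, y)
        = - ∫ y in (-1 : ℝ)..1, (starRingEnd ℂ) (pdy Φ (t, y)) * pdy (pdt Φ) (t, y) := by
      have h := IBPc (u := fun z => (starRingEnd ℂ) (Φ (t, z)))
        (u' := fun y => (starRingEnd ℂ) (pdy Φ (t, y)))
        (w := fun z => pdy (pdt Φ) (t, z)) (w' := fun y => pdy (pdy (pdt Φ)) (t, y))
        Hs0 (fun y => hasDerivAt_snd hφ.pdt.pdy t y) cs1 ct2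
      rw [h]; simp [b0p, b0m]
    have ibp4a : ∫ y in (-1 : ℝ)..1, (starRingEnd ℂ) (Φ (t, y)) * pdy (pdy (pdy (pdy Φ))) (t, y)
        = - ∫ y in (-1 : ℝ)..1, (starRingEnd ℂ) (pdy Φ (t, y)) * pdy (pdy (pdy Φ)) (t, y) := by
      have h := IBPc (u := fun z => (starRingEnd ℂ) (Φ (t, z)))
        (u' := fun y => (starRingEnd ℂ) (pdy Φ (t, y)))
        (w := fun z => pdy (pdy (pdy Φ)) (t, z)) (w' := fun y => pdy (pdy (pdy (pdy Φ))) (t, y))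
        Hs0 (fun y => hasDerivAt_snd hφ.pdy.pdy.pdy t y) cs1 c4
      rw [h]; simp [b0p, b0m]
    have ibp4b : ∫ y in (-1 : ℝ)..1, (starRingEnd ℂ) (pdy Φ (t, y)) * pdy (pdy (pdy Φ)) (t, y)
        = - ∫ y in (-1 : ℝ)..1, (starRingEnd ℂ) (pdy (pdy Φ) (t, y)) * pdy (pdy Φ) (t, y) := by
      have h := IBPc (u := fun z => (starRingEnd ℂ) (pdy Φ (t, z)))
        (u' := fun y => (starRingEnd ℂ) (pdy (pdy Φ) (t, y)))
        (w := fun z => pdy (pdy Φ) (t, z)) (w' := fun y => pdy (pdy (pdy Φ)) (t, y))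
        Hs1 (fun y => hasDerivAt_snd hφ.pdy.pdy t y) cs2 c3
      rw [h]; simp [b1p, b1m]
    have ibp2 : ∫ y in (-1 : ℝ)..1, (starRingEnd ℂ) (Φ (t, y)) * pdy (pdy Φ) (t, y)
        = - ∫ y in (-1 : ℝ)..1, (starRingEnd ℂ) (pdy Φ (t, y)) * pdy Φ (t, y) := by
      have h := IBPc (u := fun z => (starRingEnd ℂ) (Φ (t, z)))
        (u' := fun y => (starRingEnd ℂ) (pdy Φ (t, y)))
        (w := fun z => pdy Φ (t, z)) (w' := fun y => pdy (pdy Φ) (t, y))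
        Hs0 (fun y => hasDerivAt_snd hφ.pdy t y) cs1 c2
      rw [h]; simp [b0p, b0m]
    -- the Orr–Sommerfeld right-hand side
    set Ros : ℝ → ℂ := fun y =>
      (ν : ℂ) * (pdy (pdy (pdy (pdy Φ))) (t, y) - 2 * (α : ℂ) ^ 2 * pdy (pdy Φ) (t, y)
          + (α : ℂ) ^ 4 * Φ (t, y))
        - Complex.I * (α : ℂ) * (1 - (y : ℂ) ^ 2)
          * (pdy (pdy Φ) (t, y) - (α : ℂ) ^ 2 * Φ (t, y))
        - 2 * Complex.I * (α : ℂ) * Φ (t, y) with hRosdef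
    have cRos : Continuous Ros := by
      rw [hRosdef]
      apply Continuous.sub
      apply Continuous.sub
      · exact continuous_const.mul
          ((c4.sub (continuous_const.mul c2)).add (continuous_const.mul c0))
      · apply Continuous.mul
        · exact (continuous_const.mul
            (continuous_const.sub ((Complex.continuous_ofReal.comp continuous_id).pow 2)))
        · exact c2.sub (continuous_const.mul c0)
      · exact continuous_const.mul c0
    have hOSt : ∀ y ∈ Set.uIcc (-1 : ℝ) 1,
        pdy (pdy (pdt Φ)) (t, y) - (α : ℂ) ^ 2 * pdt Φ (t, y) = Ros y := by
      intro y hy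
      have h := hOS t y (memIcc y hy)
      rw [hQT t y, hP4 t y] at h
      simp only [hP2 t y] at h
      exact h
    -- key identity: ∫ (conj ∂φ ∂∂ₜφ + α² conj φ ∂ₜφ) = - ∫ conj φ · Ros
    have keyC : (∫ y in (-1 : ℝ)..1,
        ((starRingEnd ℂ) (pdy Φ (t, y)) * pdy (pdt Φ) (t, y)
          + (α : ℂ) ^ 2 * ((starRingEnd ℂ) (Φ (t, y)) * pdt Φ (t, y))))
        = - ∫ y in (-1 : ℝ)..1, (starRingEnd ℂ) (Φ (t, y)) * Ros y := by
      have h1 : Set.EqOn (fun y => (starRingEnd ℂ) (Φ (t, y)) * Ros y)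
          (fun y => (starRingEnd ℂ) (Φ (t, y)) * pdy (pdy (pdt Φ)) (t, y)
            - (α : ℂ) ^ 2 * ((starRingEnd ℂ) (Φ (t, y)) * pdt Φ (t, y)))
          (Set.uIcc (-1 : ℝ) 1) := by
        intro y hy
        show (starRingEnd ℂ) (Φ (t, y)) * Ros y = _
        rw [← hOSt y hy]; ring
      rw [intervalIntegral.integral_congr h1, intervalIntegral.integral_sub
          ((cs0.fun_mul ct2).intervalIntegrable _ _)
          ((continuous_const.fun_mul (cs0.fun_mul ct0)).intervalIntegrable _ _),
        ibpτ,
        intervalIntegral.integral_add ((cs1.fun_mul ct1).intervalIntegrable _ _)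
          ((continuous_const.fun_mul (cs0.fun_mul ct0)).intervalIntegrable _ _)]
      ring
    -- pointwise real-part expansion of conj φ · Ros
    have ePW : ∀ y : ℝ, ((starRingEnd ℂ) (Φ (t, y)) * Ros y).re
        = ν * ((starRingEnd ℂ) (Φ (t, y)) * pdy (pdy (pdy (pdy Φ))) (t, y)).re
          + ((-(2 * ν * α ^ 2)) * ((starRingEnd ℂ) (Φ (t, y)) * pdy (pdy Φ) (t, y)).re
          + (ν * α ^ 4 * ((starRingEnd ℂ) (Φ (t, y)) * Φ (t, y)).re
          + (α * ((1 - y ^ 2) * ((starRingEnd ℂ) (Φ (t, y)) * pdy (pdy Φ) (t, y)).im)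
          + ((-(α ^ 3)) * ((1 - y ^ 2) * ((starRingEnd ℂ) (Φ (t, y)) * Φ (t, y)).im)
          + (2 * α) * ((starRingEnd ℂ) (Φ (t, y)) * Φ (t, y)).im)))) := by
      intro y
      rw [hRosdef]
      simp only [← Complex.ofReal_pow]
      simp only [Complex.mul_re, Complex.mul_im, Complex.add_re, Complex.add_im,
        Complex.sub_re, Complex.sub_im, Complex.I_re, Complex.I_im, Complex.ofReal_re,
        Complex.ofReal_im, Complex.one_re, Complex.one_im, Complex.re_ofNat,
        Complex.im_ofNat]
      ring
    -- continuity of the six real pieces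
    have cre4 : Continuous fun y : ℝ =>
        ((starRingEnd ℂ) (Φ (t, y)) * pdy (pdy (pdy (pdy Φ))) (t, y)).re :=
      Complex.continuous_re.comp (cs0.mul c4)
    have cre2 : Continuous fun y : ℝ =>
        ((starRingEnd ℂ) (Φ (t, y)) * pdy (pdy Φ) (t, y)).re :=
      Complex.continuous_re.comp (cs0.mul c2)
    have cre0 : Continuous fun y : ℝ => ((starRingEnd ℂ) (Φ (t, y)) * Φ (t, y)).re :=
      Complex.continuous_re.comp (cs0.mul c0)
    have cim0 : Continuous fun y : ℝ => ((starRingEnd ℂ) (Φ (t, y)) * Φ (t, y)).im :=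
      Complex.continuous_im.comp (cs0.mul c0)
    have cpar : Continuous fun y : ℝ => 1 - y ^ 2 :=
      continuous_const.sub (continuous_id.pow 2)
    have k1 : Continuous fun y : ℝ =>
        ν * ((starRingEnd ℂ) (Φ (t, y)) * pdy (pdy (pdy (pdy Φ))) (t, y)).re :=
      continuous_const.mul cre4
    have k2 : Continuous fun y : ℝ =>
        (-(2 * ν * α ^ 2)) * ((starRingEnd ℂ) (Φ (t, y)) * pdy (pdy Φ) (t, y)).re :=
      continuous_const.mul cre2
    have k3 : Continuous fun y : ℝ =>
        ν * α ^ 4 * ((starRingEnd ℂ) (Φ (t, y)) * Φ (t, y)).re :=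
      continuous_const.mul cre0
    have k4 : Continuous fun y : ℝ =>
        α * ((1 - y ^ 2) * ((starRingEnd ℂ) (Φ (t, y)) * pdy (pdy Φ) (t, y)).im) :=
      continuous_const.mul (cpar.mul cdW)
    have k5 : Continuous fun y : ℝ =>
        (-(α ^ 3)) * ((1 - y ^ 2) * ((starRingEnd ℂ) (Φ (t, y)) * Φ (t, y)).im) :=
      continuous_const.mul (cpar.mul cim0)
    have k6 : Continuous fun y : ℝ =>
        (2 * α) * ((starRingEnd ℂ) (Φ (t, y)) * Φ (t, y)).im :=
      continuous_const.mul cim0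
    -- split the integral of the real part
    have hsplit : ∫ y in (-1 : ℝ)..1, ((starRingEnd ℂ) (Φ (t, y)) * Ros y).re
        = ν * (∫ y in (-1 : ℝ)..1,
              ((starRingEnd ℂ) (Φ (t, y)) * pdy (pdy (pdy (pdy Φ))) (t, y)).re)
          + ((-(2 * ν * α ^ 2)) * (∫ y in (-1 : ℝ)..1,
              ((starRingEnd ℂ) (Φ (t, y)) * pdy (pdy Φ) (t, y)).re)
          + (ν * α ^ 4 * (∫ y in (-1 : ℝ)..1, ((starRingEnd ℂ) (Φ (t, y)) * Φ (t, y)).re)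
          + (α * (∫ y in (-1 : ℝ)..1,
              (1 - y ^ 2) * ((starRingEnd ℂ) (Φ (t, y)) * pdy (pdy Φ) (t, y)).im)
          + ((-(α ^ 3)) * (∫ y in (-1 : ℝ)..1,
              (1 - y ^ 2) * ((starRingEnd ℂ) (Φ (t, y)) * Φ (t, y)).im)
          + (2 * α) * (∫ y in (-1 : ℝ)..1,
              ((starRingEnd ℂ) (Φ (t, y)) * Φ (t, y)).im))))) := by
      rw [intervalIntegral.integral_congr (g := fun y =>
        ν * ((starRingEnd ℂ) (Φ (t, y)) * pdy (pdy (pdy (pdy Φ))) (t, y)).re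
          + ((-(2 * ν * α ^ 2)) * ((starRingEnd ℂ) (Φ (t, y)) * pdy (pdy Φ) (t, y)).re
          + (ν * α ^ 4 * ((starRingEnd ℂ) (Φ (t, y)) * Φ (t, y)).re
          + (α * ((1 - y ^ 2) * ((starRingEnd ℂ) (Φ (t, y)) * pdy (pdy Φ) (t, y)).im)
          + ((-(α ^ 3)) * ((1 - y ^ 2) * ((starRingEnd ℂ) (Φ (t, y)) * Φ (t, y)).im)
          + (2 * α) * ((starRingEnd ℂ) (Φ (t, y)) * Φ (t, y)).im)))))
        (fun y _ => ePW y),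
        intervalIntegral.integral_add (k1.intervalIntegrable _ _)
          ((k2.fun_add (k3.fun_add (k4.fun_add (k5.fun_add k6)))).intervalIntegrable _ _),
        intervalIntegral.integral_add (k2.intervalIntegrable _ _)
          ((k3.fun_add (k4.fun_add (k5.fun_add k6))).intervalIntegrable _ _),
        intervalIntegral.integral_add (k3.intervalIntegrable _ _)
          ((k4.fun_add (k5.fun_add k6)).intervalIntegrable _ _),
        intervalIntegral.integral_add (k4.intervalIntegrable _ _)
          ((k5.fun_add k6).intervalIntegrable _ _),
        intervalIntegral.integral_add (k5.intervalIntegrable _ _)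
          (k6.intervalIntegrable _ _)]
      simp only [intervalIntegral.integral_const_mul]
    -- evaluate the pieces
    have E4 : ∫ y in (-1 : ℝ)..1,
        ((starRingEnd ℂ) (Φ (t, y)) * pdy (pdy (pdy (pdy Φ))) (t, y)).re
        = ∫ y in (-1 : ℝ)..1, ‖pdy (pdy Φ) (t, y)‖ ^ 2 := by
      rw [← int_re (cs0.fun_mul c4), ibp4a, ibp4b, neg_neg, int_re (cs2.fun_mul c2)]
      exact intervalIntegral.integral_congr fun y _ => star_mul_self_re _
    have E2 : ∫ y in (-1 : ℝ)..1, ((starRingEnd ℂ) (Φ (t, y)) * pdy (pdy Φ) (t, y)).re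
        = - ∫ y in (-1 : ℝ)..1, ‖pdy Φ (t, y)‖ ^ 2 := by
      rw [← int_re (cs0.fun_mul c2), ibp2, Complex.neg_re, int_re (cs1.fun_mul c1)]
      have hcg : ∫ y in (-1 : ℝ)..1, ((starRingEnd ℂ) (pdy Φ (t, y)) * pdy Φ (t, y)).re
          = ∫ y in (-1 : ℝ)..1, ‖pdy Φ (t, y)‖ ^ 2 :=
        intervalIntegral.integral_congr fun y _ => star_mul_self_re _
      rw [hcg]
    have E0 : ∫ y in (-1 : ℝ)..1, ((starRingEnd ℂ) (Φ (t, y)) * Φ (t, y)).re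
        = ∫ y in (-1 : ℝ)..1, ‖Φ (t, y)‖ ^ 2 :=
      intervalIntegral.integral_congr fun y _ => star_mul_self_re _
    have Eim0 : ∫ y in (-1 : ℝ)..1,
        (1 - y ^ 2) * ((starRingEnd ℂ) (Φ (t, y)) * Φ (t, y)).im = 0 := by
      have h : Set.EqOn (fun y : ℝ => (1 - y ^ 2) * ((starRingEnd ℂ) (Φ (t, y)) * Φ (t, y)).im)
          (fun _ => (0 : ℝ)) (Set.uIcc (-1 : ℝ) 1) := by
        intro y _
        show (1 - y ^ 2) * ((starRingEnd ℂ) (Φ (t, y)) * Φ (t, y)).im = 0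
        rw [show ((starRingEnd ℂ) (Φ (t, y)) * Φ (t, y)).im = 0 from star_mul_self_im _,
          mul_zero]
      rw [intervalIntegral.integral_congr h]
      simp
    have Eim0b : ∫ y in (-1 : ℝ)..1, ((starRingEnd ℂ) (Φ (t, y)) * Φ (t, y)).im = 0 := by
      have h : Set.EqOn (fun y : ℝ => ((starRingEnd ℂ) (Φ (t, y)) * Φ (t, y)).im)
          (fun _ => (0 : ℝ)) (Set.uIcc (-1 : ℝ) 1) := fun y _ => star_mul_self_im _
      rw [intervalIntegral.integral_congr h]
      simp
    -- the stream-function part of the derivative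
    have hFA1 : ∀ y : ℝ, FA' t y = 2 * (((starRingEnd ℂ) (pdy Φ (t, y)) * pdy (pdt Φ) (t, y))
        + (α : ℂ) ^ 2 * ((starRingEnd ℂ) (Φ (t, y)) * pdt Φ (t, y))).re := by
      intro y
      show 2 * ((starRingEnd ℂ) (pdy Φ (t, y)) * pdy (pdt Φ) (t, y)).re
          + α ^ 2 * (2 * ((starRingEnd ℂ) (Φ (t, y)) * pdt Φ (t, y)).re) = _
      rw [Complex.add_re]
      rw [show ((α : ℂ) ^ 2 * ((starRingEnd ℂ) (Φ (t, y)) * pdt Φ (t, y))).re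
        = α ^ 2 * ((starRingEnd ℂ) (Φ (t, y)) * pdt Φ (t, y)).re by
          rw [← Complex.ofReal_pow, Complex.re_ofReal_mul]]
      ring
    have hFAval : ∫ y in (-1 : ℝ)..1, FA' t y
        = -(2 * ν) * (∫ y in (-1 : ℝ)..1, ‖pdy (pdy Φ) (t, y)‖ ^ 2)
          - 4 * ν * α ^ 2 * (∫ y in (-1 : ℝ)..1, ‖pdy Φ (t, y)‖ ^ 2)
          - 2 * ν * α ^ 4 * (∫ y in (-1 : ℝ)..1, ‖Φ (t, y)‖ ^ 2)
          - 4 * α * (∫ y in (-1 : ℝ)..1, y * W (t, y)) := by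
      have ccomb : Continuous fun y : ℝ =>
          ((starRingEnd ℂ) (pdy Φ (t, y)) * pdy (pdt Φ) (t, y))
            + (α : ℂ) ^ 2 * ((starRingEnd ℂ) (Φ (t, y)) * pdt Φ (t, y)) :=
        (cs1.mul ct1).add (continuous_const.mul (cs0.mul ct0))
      calc ∫ y in (-1 : ℝ)..1, FA' t y
          = ∫ y in (-1 : ℝ)..1, 2 * (((starRingEnd ℂ) (pdy Φ (t, y)) * pdy (pdt Φ) (t, y))
              + (α : ℂ) ^ 2 * ((starRingEnd ℂ) (Φ (t, y)) * pdt Φ (t, y))).re :=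
            intervalIntegral.integral_congr fun y _ => hFA1 y
        _ = 2 * ∫ y in (-1 : ℝ)..1, (((starRingEnd ℂ) (pdy Φ (t, y)) * pdy (pdt Φ) (t, y))
              + (α : ℂ) ^ 2 * ((starRingEnd ℂ) (Φ (t, y)) * pdt Φ (t, y))).re :=
            intervalIntegral.integral_const_mul _ _
        _ = 2 * (∫ y in (-1 : ℝ)..1, (((starRingEnd ℂ) (pdy Φ (t, y)) * pdy (pdt Φ) (t, y))
              + (α : ℂ) ^ 2 * ((starRingEnd ℂ) (Φ (t, y)) * pdt Φ (t, y)))).re := by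
            rw [int_re ccomb]
        _ = 2 * (- ∫ y in (-1 : ℝ)..1, (starRingEnd ℂ) (Φ (t, y)) * Ros y).re := by
            rw [keyC]
        _ = -2 * ∫ y in (-1 : ℝ)..1, ((starRingEnd ℂ) (Φ (t, y)) * Ros y).re := by
            rw [Complex.neg_re, int_re (cs0.fun_mul cRos)]; ring
        _ = _ := by
            rw [hsplit, E4, E2, E0, hIW, Eim0, Eim0b]
            ring
    -- nonnegativity of the dissipation integrals
    have D2nn : 0 ≤ ∫ y in (-1 : ℝ)..1, ‖pdy (pdy Φ) (t, y)‖ ^ 2 :=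
      intervalIntegral.integral_nonneg (by norm_num) (fun y _ => by positivity)
    have D1nn : 0 ≤ ∫ y in (-1 : ℝ)..1, ‖pdy Φ (t, y)‖ ^ 2 :=
      intervalIntegral.integral_nonneg (by norm_num) (fun y _ => by positivity)
    have D0nn : 0 ≤ ∫ y in (-1 : ℝ)..1, ‖Φ (t, y)‖ ^ 2 :=
      intervalIntegral.integral_nonneg (by norm_num) (fun y _ => by positivity)
    rw [hFAval, hFGval]
    nlinarith [mul_nonneg hν.le D2nn, mul_nonneg (mul_nonneg hν.le (sq_nonneg α)) D1nn,
      mul_nonneg (mul_nonneg hν.le (by positivity : (0 : ℝ) ≤ α ^ 4)) D0nn]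
  exact antitone_of_deriv_nonpos (fun t => (hTot t).differentiableAt)
    (fun t => by rw [(hTot t).deriv]; exact hD t)
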